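/- arXiv:2312.10460 — 2 statements merged into one kernel-verified Lean document; each statement's English description precedes it below -/
import Mathlib

section
/- Let $\psi(x)=(2-x)^{-1/4}$ on $[1,2)$. Then $\psi\in L^2(1,2)$ with $\int_1^2\psi(x)^2\,dx=2$, and for the flow $F_t$ of $\dot x=x(2-x)$ on $[1,2]$, the Koopman operators $K^t\psi=\psi\circ F_t$ satisfy: for every $M\ge 0$ there exists $t^*\ge 0$ such that $\|K^t\psi\|_{L^2(1,2)}\ge M\,\|\psi\|_{L^2(1,2)}$ for all $t\ge t^*$. In particular, the Koopman semigroup $(K^t)_{t\ge0}$ is not uniformly bounded on $L^2(1,2)$. -/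
open Set MeasureTheory

lemma base_integrable : IntegrableOn (fun z : ℝ => (2 - z) ^ (-(1/2 : ℝ))) (Ioo (1 : ℝ) 2) := by
  have h : IntervalIntegrable (fun x : ℝ => x ^ (-(1/2 : ℝ))) volume 1 0 :=
    (intervalIntegral.intervalIntegrable_rpow' (by norm_num)).symm
  have h2 := h.comp_sub_left 2
  norm_num at h2
  exact h2.1.mono_set Ioo_subset_Ioc_self

lemma base_integral : (∫ z in Ioo (1 : ℝ) 2, (2 - z) ^ (-(1/2 : ℝ))) = 2 := by
  rw [← integral_Ioc_eq_integral_Ioo,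
    ← intervalIntegral.integral_of_le (by norm_num : (1:ℝ) ≤ 2),
    intervalIntegral.integral_comp_sub_left (fun x : ℝ => x ^ (-(1/2 : ℝ))) 2]
  norm_num
  rw [integral_rpow (Or.inl (by norm_num))]
  rw [Real.zero_rpow (by norm_num), Real.one_rpow]
  norm_num

lemma split_rpow (a b : ℝ) (ha : 0 < a) (hb : 0 < b) :
    (a / b) ^ (-(1/2 : ℝ)) = a ^ (-(1/2 : ℝ)) * b ^ ((1/2 : ℝ)) := by
  rw [div_eq_mul_inv, Real.mul_rpow ha.le (inv_nonneg.2 hb.le), Real.inv_rpow hb.le,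
    ← Real.rpow_neg hb.le]
  norm_num

lemma koop (ψ : ℝ → ℝ) (hψ : ∀ z, ψ z = (2 - z) ^ (-(1/4 : ℝ)))
    (F : ℝ → ℝ → ℝ)
    (hF : ∀ t x₀, F t x₀ = (2 * Real.exp (2 * t) * x₀) / (2 - x₀ + Real.exp (2 * t) * x₀))
    (t : ℝ) (ht : 0 ≤ t) :
    IntegrableOn (fun z => ψ (F t z) ^ 2) (Ioo (1 : ℝ) 2) ∧
    Real.exp t ≤ ∫ z in Ioo (1 : ℝ) 2, ψ (F t z) ^ 2 := by
  set c := Real.exp (2 * t) with hc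
  have hc1 : 1 ≤ c := Real.one_le_exp (by linarith)
  -- pointwise formula
  have key : ∀ z ∈ Ioo (1 : ℝ) 2, ψ (F t z) ^ 2
      = (2 - z) ^ (-(1/2 : ℝ)) * ((2 - z + c * z) / 2) ^ ((1/2 : ℝ)) := by
    intro z hz
    obtain ⟨hz1, hz2⟩ := hz
    have h2z : (0 : ℝ) < 2 - z := by linarith
    have hD : (0 : ℝ) < 2 - z + c * z := by nlinarith
    have hFt : 2 - F t z = (2 - z) / ((2 - z + c * z) / 2) := by
      rw [hF]
      field_simp
      ring
    have hXpos : (0 : ℝ) < (2 - z) / ((2 - z + c * z) / 2) := div_pos h2z (by linarith)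
    have h1 : ψ (F t z) ^ 2 = (2 - F t z) ^ (-(1/2 : ℝ)) := by
      rw [hψ, sq, ← Real.rpow_add (by rw [hFt]; exact hXpos)]
      norm_num
    rw [h1, hFt, split_rpow _ _ h2z (by linarith)]
  have hPnn : ∀ z ∈ Ioo (1 : ℝ) 2, 0 ≤ (2 - z) ^ (-(1/2 : ℝ)) := fun z hz =>
    Real.rpow_nonneg (by linarith [hz.2] : (0:ℝ) ≤ 2 - z) _
  have hQub : ∀ z ∈ Ioo (1 : ℝ) 2, ((2 - z + c * z) / 2) ^ ((1/2 : ℝ)) ≤ c ^ ((1/2 : ℝ)) := by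
    intro z hz
    obtain ⟨hz1, hz2⟩ := hz
    exact Real.rpow_le_rpow (by nlinarith) (by nlinarith) (by norm_num)
  have hQlb : ∀ z ∈ Ioo (1 : ℝ) 2, (c / 2) ^ ((1/2 : ℝ)) ≤ ((2 - z + c * z) / 2) ^ ((1/2 : ℝ)) := by
    intro z hz
    obtain ⟨hz1, hz2⟩ := hz
    exact Real.rpow_le_rpow (by positivity) (by nlinarith) (by norm_num)
  -- integrability of the product formula
  have hcont : ContinuousOn
      (fun z : ℝ => (2 - z) ^ (-(1/2 : ℝ)) * ((2 - z + c * z) / 2) ^ ((1/2 : ℝ)))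
      (Ioo (1 : ℝ) 2) := by
    apply ContinuousOn.mul
    · exact ContinuousOn.rpow_const (by fun_prop) fun x hx => Or.inl (by
        have := hx.2; intro h; nlinarith [hx.2])
    · exact ContinuousOn.rpow_const (by fun_prop) fun x hx => Or.inr (by norm_num)
  have hg_int : IntegrableOn
      (fun z : ℝ => (2 - z) ^ (-(1/2 : ℝ)) * ((2 - z + c * z) / 2) ^ ((1/2 : ℝ)))
      (Ioo (1 : ℝ) 2) := by
    apply Integrable.mono' (base_integrable.const_mul (c ^ ((1/2 : ℝ))))
      (hcont.aestronglyMeasurable measurableSet_Ioo)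
    rw [ae_restrict_iff' measurableSet_Ioo]
    filter_upwards with z hz
    have h1 : 0 ≤ ((2 - z + c * z) / 2) ^ ((1/2 : ℝ)) := by
      obtain ⟨hz1, hz2⟩ := hz
      exact Real.rpow_nonneg (by nlinarith) _
    rw [Real.norm_eq_abs, abs_of_nonneg (mul_nonneg (hPnn z hz) h1), mul_comm (c ^ ((1/2:ℝ)))]
    exact mul_le_mul_of_nonneg_left (hQub z hz) (hPnn z hz)
  have hK_int : IntegrableOn (fun z => ψ (F t z) ^ 2) (Ioo (1 : ℝ) 2) :=
    hg_int.congr_fun (fun z hz => (key z hz).symm) measurableSet_Ioo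
  refine ⟨hK_int, ?_⟩
  have hmono : ∫ z in Ioo (1 : ℝ) 2, (c / 2) ^ ((1/2 : ℝ)) * (2 - z) ^ (-(1/2 : ℝ))
      ≤ ∫ z in Ioo (1 : ℝ) 2, ψ (F t z) ^ 2 := by
    apply setIntegral_mono_on (base_integrable.const_mul _) hK_int measurableSet_Ioo
    intro z hz
    rw [key z hz, mul_comm]
    exact mul_le_mul_of_nonneg_left (hQlb z hz) (hPnn z hz)
  have hlhs : ∫ z in Ioo (1 : ℝ) 2, (c / 2) ^ ((1/2 : ℝ)) * (2 - z) ^ (-(1/2 : ℝ))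
      = (c / 2) ^ ((1/2 : ℝ)) * 2 := by
    rw [integral_const_mul, base_integral]
  rw [hlhs] at hmono
  refine le_trans ?_ hmono
  rw [← Real.sqrt_eq_rpow, Real.sqrt_div (by positivity) 2]
  have hsc : Real.sqrt c = Real.exp t := by
    rw [hc, show (2 : ℝ) * t = t + t by ring, Real.exp_add,
      Real.sqrt_mul_self (Real.exp_nonneg t)]
  have hs2 : (0 : ℝ) < Real.sqrt 2 := Real.sqrt_pos.mpr two_pos
  have hs2' : Real.sqrt 2 ≤ 2 := by
    nlinarith [Real.sq_sqrt (by norm_num : (0:ℝ) ≤ 2), Real.sqrt_nonneg 2]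
  rw [div_mul_eq_mul_div, le_div_iff₀ hs2, hsc]
  nlinarith [Real.exp_nonneg t]

/-- For `ψ(x) = (2-x)^{-1/4}` and the flow
`F_t(x₀) = 2 e^{2t} x₀/(2 - x₀ + e^{2t} x₀)` of `ẋ = x(2-x)` on `[1,2]`:
`ψ ∈ L²(1,2)` with `∫₁² ψ² = 2`; for every `M ≥ 0` there is `t* ≥ 0` such that
`‖K^t ψ‖_{L²} ≥ M ‖ψ‖_{L²}` for all `t ≥ t*` (`K^t ψ = ψ ∘ F_t`); in particular the Koopman
semigroup is not uniformly bounded on `L²(1,2)`. -/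
theorem stmt7
    (ψ : ℝ → ℝ) (hψ : ∀ z, ψ z = (2 - z) ^ (-(1/4 : ℝ)))
    (F : ℝ → ℝ → ℝ)
    (hF : ∀ t x₀, F t x₀ = (2 * Real.exp (2 * t) * x₀) / (2 - x₀ + Real.exp (2 * t) * x₀)) :
    IntegrableOn (fun z => ψ z ^ 2) (Ioo (1 : ℝ) 2) ∧
    (∫ z in Ioo (1 : ℝ) 2, ψ z ^ 2) = 2 ∧
    (∀ M : ℝ, 0 ≤ M → ∃ tstar : ℝ, 0 ≤ tstar ∧ ∀ t : ℝ, tstar ≤ t →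
      M * Real.sqrt (∫ z in Ioo (1 : ℝ) 2, ψ z ^ 2)
        ≤ Real.sqrt (∫ z in Ioo (1 : ℝ) 2, ψ (F t z) ^ 2)) ∧
    ¬ ∃ M : ℝ, ∀ t : ℝ, 0 ≤ t →
      Real.sqrt (∫ z in Ioo (1 : ℝ) 2, ψ (F t z) ^ 2)
        ≤ M * Real.sqrt (∫ z in Ioo (1 : ℝ) 2, ψ z ^ 2) := by
  have hpt : ∀ z ∈ Ioo (1 : ℝ) 2, ψ z ^ 2 = (2 - z) ^ (-(1/2 : ℝ)) := by
    intro z hz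
    obtain ⟨hz1, hz2⟩ := hz
    rw [hψ, sq, ← Real.rpow_add (by linarith : (0:ℝ) < 2 - z)]
    norm_num
  have h1 : IntegrableOn (fun z => ψ z ^ 2) (Ioo (1 : ℝ) 2) :=
    base_integrable.congr_fun (fun z hz => (hpt z hz).symm) measurableSet_Ioo
  have h2 : (∫ z in Ioo (1 : ℝ) 2, ψ z ^ 2) = 2 := by
    rw [setIntegral_congr_fun measurableSet_Ioo hpt, base_integral]
  have hs2 : (0 : ℝ) < Real.sqrt 2 := Real.sqrt_pos.mpr two_pos
  have hs2' : Real.sqrt 2 ≤ 2 := by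
    nlinarith [Real.sq_sqrt (by norm_num : (0:ℝ) ≤ 2), Real.sqrt_nonneg 2]
  have h3 : ∀ M : ℝ, 0 ≤ M → ∃ tstar : ℝ, 0 ≤ tstar ∧ ∀ t : ℝ, tstar ≤ t →
      M * Real.sqrt (∫ z in Ioo (1 : ℝ) 2, ψ z ^ 2)
        ≤ Real.sqrt (∫ z in Ioo (1 : ℝ) 2, ψ (F t z) ^ 2) := by
    intro M hM
    refine ⟨max 0 (2 * Real.log (2 * M + 1)), le_max_left _ _, fun t ht => ?_⟩
    have ht0 : 0 ≤ t := le_trans (le_max_left _ _) ht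
    obtain ⟨hint, hlb⟩ := koop ψ hψ F hF t ht0
    rw [h2]
    have hexp : Real.sqrt (Real.exp t) = Real.exp (t/2) := by
      rw [show t = t/2 + t/2 by ring, Real.exp_add,
        Real.sqrt_mul_self (Real.exp_nonneg _)]
      rw [show t/2 + t/2 = t by ring]
    have hchain : Real.exp (t/2) ≤ Real.sqrt (∫ z in Ioo (1 : ℝ) 2, ψ (F t z) ^ 2) := by
      rw [← hexp]; exact Real.sqrt_le_sqrt hlb
    refine le_trans ?_ hchain
    have hlog : 2 * Real.log (2 * M + 1) ≤ t := le_trans (le_max_right _ _) ht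
    have h2M : (0 : ℝ) < 2 * M + 1 := by linarith
    have : (2 * M + 1 : ℝ) ≤ Real.exp (t/2) := by
      calc (2 * M + 1 : ℝ) = Real.exp (Real.log (2 * M + 1)) := (Real.exp_log h2M).symm
        _ ≤ Real.exp (t/2) := Real.exp_le_exp.mpr (by linarith)
    nlinarith
  refine ⟨h1, h2, h3, ?_⟩
  rintro ⟨M, hM⟩
  have h0 := hM 0 le_rfl
  have hF0 : ∀ z : ℝ, F 0 z = z := by
    intro z
    rw [hF, mul_zero, Real.exp_zero]
    rw [show (2:ℝ) - z + 1 * z = 2 by ring]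
    ring
  simp only [hF0] at h0
  rw [h2] at h0
  have hM1 : 1 ≤ M := by nlinarith
  obtain ⟨ts, hts, hts'⟩ := h3 (M + 1) (by linarith)
  have hA := hts' ts le_rfl
  have hB := hM ts hts
  rw [h2] at hA hB
  nlinarith
end

section
/- Let $\rho_t(x,dy)=\sqrt{c_t/\pi}\,\exp[-c_t(y-e^{-\alpha t}x)^2]\,dy$ with $c_t=\alpha/(1-e^{-2\alpha t})$, $\alpha>0$, $t>0$, be the Ornstein–Uhlenbeck transition kernel, and let $k_z^{\sigma}(x)=\exp(-(x-z)^2/\sigma^2)$ be a Gaussian RBF feature. Setting $\tau=\sqrt{c_t\sigma^2/(1+c_t\sigma^2)}$ and $\nu=e^{\alpha t}\sigma/\tau$, one has for all $x\in\mathbb{R}$: $\int_{-\infty}^{\infty}k_z^{\sigma}(y)\,\rho_t(x,dy)=\tau\cdot k_{e^{\alpha t}z}^{\nu}(x)$. -/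
/-!
Completing the square turns the product of two Gaussians into a single Gaussian in `y` times a
constant depending only on the distance of the centres; integrating out `y` leaves a Gaussian
feature of `x` centred at `e^{αt} z`.
-/

open Real MeasureTheory

theorem integral_exp_neg_sq_mul_exp_neg_sq {a b : ℝ} (hab : a + b ≠ 0) (u v : ℝ) :
    ∫ y : ℝ, exp (-a * (y - u) ^ 2) * exp (-b * (y - v) ^ 2)
      = √(π / (a + b)) * exp (-(a * b / (a + b)) * (u - v) ^ 2) := by
  have hsq (y : ℝ) : -a * (y - u) ^ 2 + -b * (y - v) ^ 2
      = -(a + b) * (y - (a * u + b * v) / (a + b)) ^ 2 + -(a * b / (a + b)) * (u - v) ^ 2 := by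
    field_simp
    ring
  simp_rw [← exp_add, hsq, exp_add, integral_mul_const,
    integral_sub_right_eq_self (fun y => exp (-(a + b) * y ^ 2)), integral_gaussian]

/-- The Ornstein–Uhlenbeck transition kernel applied to a Gaussian RBF feature:
with `c_t = α/(1-e^{-2αt})`, `τ = √(c_t σ²/(1+c_t σ²))` and `ν = e^{αt} σ/τ`,
`∫ exp(-(y-z)²/σ²) √(c_t/π) exp(-c_t (y - e^{-αt}x)²) dy = τ · exp(-(x - e^{αt}z)²/ν²)`. -/
theorem stmt9
    (α t σ : ℝ) (hα : 0 < α) (ht : 0 < t) (hσ : 0 < σ)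
    (c τ ν : ℝ)
    (hc : c = α / (1 - Real.exp (-2 * α * t)))
    (hτ : τ = Real.sqrt (c * σ ^ 2 / (1 + c * σ ^ 2)))
    (hν : ν = Real.exp (α * t) * σ / τ)
    (z x : ℝ) :
    ∫ y : ℝ, Real.exp (-(y - z) ^ 2 / σ ^ 2)
        * (Real.sqrt (c / Real.pi) * Real.exp (-c * (y - Real.exp (-α * t) * x) ^ 2))
      = τ * Real.exp (-(x - Real.exp (α * t) * z) ^ 2 / ν ^ 2) := by
  have hc₀ : 0 < c := hc ▸ div_pos hα (sub_pos.2 (exp_lt_one_iff.2 (by nlinarith)))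
  have hs : (σ ^ 2)⁻¹ + c ≠ 0 := by positivity
  have hτsq : τ ^ 2 = c * σ ^ 2 / (1 + c * σ ^ 2) := hτ ▸ sq_sqrt (by positivity)
  have hcoeff : √(c / π) * √(π / ((σ ^ 2)⁻¹ + c)) = τ := by
    rw [← sqrt_mul (by positivity), hτ]
    congr 1
    field_simp
  have hexponent : -((σ ^ 2)⁻¹ * c / ((σ ^ 2)⁻¹ + c)) * (z - exp (-α * t) * x) ^ 2
      = -(x - exp (α * t) * z) ^ 2 / ν ^ 2 := by
    rw [hν, div_pow, mul_pow, hτsq, neg_mul α t, exp_neg]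
    field_simp
    ring
  have hfeature (y : ℝ) : exp (-(y - z) ^ 2 / σ ^ 2) = exp (-(σ ^ 2)⁻¹ * (y - z) ^ 2) := by
    ring_nf
  simp_rw [hfeature, mul_left_comm (exp _), integral_const_mul,
    integral_exp_neg_sq_mul_exp_neg_sq hs, ← mul_assoc, hcoeff, hexponent]
end
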